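/- As t → ((5-3√3)/2)⁺, Z_{6,t}(x) converges pointwise to T₆((x+1)(2+√3)/4 - 1), where T₆(x) = -1+18x²-48x⁴+32x⁶. -/

import Mathlib

open Real Filter Set

noncomputable section

def I6 : Set ℝ := Set.Ioo ((5 - 3 * Real.sqrt 3) / 2) 0

def w (t : ℝ) : ℝ := Real.sqrt ((-1 + t) * t * (1 + t + 7 * t ^ 2))

def b0 (t : ℝ) : ℝ :=
  2 * Real.sqrt 3 * (-1 + t) ^ 2 * w t *
    (1 - 6*t + 18*t^2 - 16*t^3 - 252*t^4 + 2592*t^5 - 5844*t^6 + 20448*t^7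
      - 15768*t^8 - 219280*t^9 + 942576*t^10 - 893232*t^11 + 2825968*t^12)
    / ((1 + 2*t) ^ 5 * (-1 + 4*t) ^ 3 * (1 - 2*t + 10*t^2) ^ 4)

def b1 (t : ℝ) : ℝ :=
  (-5 + 6*t - 24*t^2 - 4*t^3) *
    (1 - 12*t^2 + 116*t^3 - 756*t^4 + 2520*t^5 + 1212*t^6 - 12744*t^7
      + 69840*t^8 - 309280*t^9 + 700704*t^10 - 709008*t^11 + 788848*t^12)
    / ((1 - 4*t) ^ 2 * (1 + 2*t) ^ 5 * (1 - 2*t + 10*t^2) ^ 4)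

def b2 (t : ℝ) : ℝ :=
  2 * Real.sqrt 3 * (-1 + t) ^ 2 * w t *
    (13 - 102*t + 390*t^2 - 880*t^3 - 288*t^4 + 19296*t^5 - 102792*t^6
      + 390816*t^7 - 939024*t^8 + 1167536*t^9 - 258720*t^10 - 339888*t^11
      + 2720848*t^12)
    / ((1 + 2*t) ^ 5 * (1 - 4*t) ^ 3 * (1 - 2*t + 10*t^2) ^ 4)

def b3 (t : ℝ) : ℝ :=
  -4 * (-1 + t) ^ 5 *
    (5 + 3*t - 6*t^2 + 564*t^3 - 3408*t^4 + 13296*t^5 - 35136*t^6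
      + 107976*t^7 - 130416*t^8 + 243952*t^9)
    / ((1 - 4*t) ^ 2 * (1 + 6*t^2 + 20*t^3) ^ 4)

def b4 (t : ℝ) : ℝ :=
  8 * Real.sqrt 3 * (1 - t) ^ 7 * w t *
    (7 - 25*t + 66*t^2 - 146*t^3 - 64*t^4 + 2580*t^5 - 6800*t^6 + 26252*t^7)
    / ((1 + 2*t) ^ 5 * (-1 + 4*t) ^ 3 * (1 - 2*t + 10*t^2) ^ 4)

def b5 (t : ℝ) : ℝ :=
  -16 * (-1 + t) ^ 10 * (1 + t + 7*t^2) * (1 + 6*t + 12*t^2 + 116*t^3)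
    / ((1 + 2*t) ^ 5 * (1 - 4*t) ^ 2 * (1 - 2*t + 10*t^2) ^ 4)

def b6 (t : ℝ) : ℝ :=
  -32 * Real.sqrt 3 * (-1 + t) ^ 12 * (1 + t + 7*t^2) * w t
    / ((1 + 2*t) ^ 5 * (-1 + 4*t) ^ 3 * (1 - 2*t + 10*t^2) ^ 4)

def Z (t x : ℝ) : ℝ :=
  b0 t + b1 t * x + b2 t * x ^ 2 + b3 t * x ^ 3 + b4 t * x ^ 4
    + b5 t * x ^ 5 + b6 t * x ^ 6

def alphaZ (t : ℝ) : ℝ :=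
  -9 * t ^ 2 / (-1 + t) ^ 2
    + (1 + 2*t) * (1 - 4*t) * (1 - 2*t + 10*t^2)
      / (2 * Real.sqrt 3 * (-1 + t) ^ 2 * w t)

def betaZ (t : ℝ) : ℝ := alphaZ t + 18 * t ^ 2 / (-1 + t) ^ 2

def gammaZ (t : ℝ) : ℝ :=
  (1 - 4*t) * (5 - 6*t + 24*t^2 + 4*t^3)
    / (12 * Real.sqrt 3 * (-1 + t) ^ 2 * w t)

def sZ (t : ℝ) : ℝ :=
  (1 - 4*t) * (1 + 6*t + 12*t^2 + 116*t^3) * w t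
    / (12 * Real.sqrt 3 * (-1 + t) ^ 3 * t * (1 + t + 7*t^2))

def AZ (t : ℝ) : ℝ :=
  (-1 + 4*t) * ((1 + 2*t) - (Real.sqrt 3 / w t) * t * (1 + t + 16*t^2))
    / (4 * (-1 + t) ^ 2)

def CZ (t : ℝ) : ℝ :=
  (1 - 4*t) * ((1 + 2*t) + (Real.sqrt 3 / w t) * t * (1 + t + 16*t^2))
    / (4 * (-1 + t) ^ 2)

def radB (t : ℝ) : ℝ :=
  (2 * Real.sqrt 3 * w t * (1 + 2*t) * (-1 + 4*t)
    + (5 - 26*t + 102*t^2 - 200*t^3 + 524*t^4)) / (1 + t + 7*t^2)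

def radD (t : ℝ) : ℝ :=
  (-2 * Real.sqrt 3 * w t * (1 + 2*t) * (-1 + 4*t)
    + (5 - 26*t + 102*t^2 - 200*t^3 + 524*t^4)) / (1 + t + 7*t^2)

def BZ (t : ℝ) : ℝ := (1 + 2*t) / (4 * (-1 + t) ^ 2) * Real.sqrt (radB t)

def DZ (t : ℝ) : ℝ := (1 + 2*t) / (4 * (-1 + t) ^ 2) * Real.sqrt (radD t)

def z1 (t : ℝ) : ℝ := AZ t - BZ t
def z2 (t : ℝ) : ℝ := CZ t - DZ t
def z3 (t : ℝ) : ℝ := AZ t + BZ t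
def z4 (t : ℝ) : ℝ := CZ t + DZ t

/-! At `t₀ = (5 - 3√3)/2` none of the denominators of the `b k` vanishes, so `t ↦ Z t x` is
continuous there and the limit is `Z t₀ x`. With `w t₀ = 63/2 - 18√3`, every `b k t₀` lies in
`ℚ(√3)`, and these values are the coefficients of `T₆((x + 1)(2 + √3)/4 - 1)`. -/

local notation "t₀" => ((5 - 3 * Real.sqrt 3) / 2 : ℝ)

@[simp]
lemma one_sub_two_mul_add_ten_mul_sq_ne_zero (t : ℝ) : 1 - 2 * t + 10 * t ^ 2 ≠ 0 := by
  nlinarith [sq_nonneg (10 * t - 1)]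

@[simp]
lemma one_add_six_mul_sq_add_twenty_mul_cube_ne_zero {t : ℝ} (h : 1 + 2 * t ≠ 0) :
    1 + 6 * t ^ 2 + 20 * t ^ 3 ≠ 0 := by
  rw [show 1 + 6 * t ^ 2 + 20 * t ^ 3 = (1 + 2 * t) * (1 - 2 * t + 10 * t ^ 2) by ring]
  exact mul_ne_zero h (one_sub_two_mul_add_ten_mul_sq_ne_zero t)

lemma continuousAt_Z (x : ℝ) {t : ℝ} (h₁ : 1 + 2 * t ≠ 0) (h₄ : 1 - 4 * t ≠ 0) :
    ContinuousAt (fun t => Z t x) t := by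
  have h₄' : -1 + 4 * t ≠ 0 := fun h => h₄ (by linarith)
  unfold Z b0 b1 b2 b3 b4 b5 b6 w
  fun_prop (disch := simp [*])

lemma sqrt_three_sq : Real.sqrt 3 ^ 2 = 3 := Real.sq_sqrt (by norm_num)

lemma sqrt_three_bounds : 3 / 2 < Real.sqrt 3 ∧ Real.sqrt 3 < 7 / 4 := by
  constructor <;> nlinarith [sqrt_three_sq, Real.sqrt_nonneg 3]

@[simp]
lemma one_add_two_mul_endpoint_ne_zero : 1 + 2 * t₀ ≠ 0 := by
  nlinarith [sqrt_three_bounds]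

@[simp]
lemma one_sub_four_mul_endpoint_ne_zero : 1 - 4 * t₀ ≠ 0 := by
  nlinarith [sqrt_three_bounds]

@[simp]
lemma neg_one_add_four_mul_endpoint_ne_zero : -1 + 4 * t₀ ≠ 0 := by
  nlinarith [sqrt_three_bounds]

lemma w_endpoint : w t₀ = 63 / 2 - 18 * Real.sqrt 3 := by
  rw [w, Real.sqrt_eq_iff_mul_self_eq_of_pos (by linarith [sqrt_three_bounds])]
  have := sqrt_three_sq
  ring_nf
  grind

lemma b0_endpoint : b0 t₀ = -97 / 128 - 3 / 32 * Real.sqrt 3 := by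
  have := sqrt_three_sq
  rw [b0, w_endpoint, div_eq_iff (by simp)]
  ring_nf
  grind

lemma b1_endpoint : b1 t₀ = -99 / 64 - 3 / 8 * Real.sqrt 3 := by
  have := sqrt_three_sq
  rw [b1, div_eq_iff (by simp)]
  ring_nf
  grind

lemma b2_endpoint : b2 t₀ = 969 / 128 + 129 / 32 * Real.sqrt 3 := by
  have := sqrt_three_sq
  rw [b2, w_endpoint, div_eq_iff (by simp)]
  ring_nf
  grind

lemma b3_endpoint : b3 t₀ = 163 / 32 + 3 * Real.sqrt 3 := by
  have := sqrt_three_sq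
  rw [b3, div_eq_iff (by simp)]
  ring_nf
  grind

lemma b4_endpoint : b4 t₀ = -2223 / 128 - 321 / 32 * Real.sqrt 3 := by
  have := sqrt_three_sq
  rw [b4, w_endpoint, div_eq_iff (by simp)]
  ring_nf
  grind

lemma b5_endpoint : b5 t₀ = -291 / 64 - 21 / 8 * Real.sqrt 3 := by
  have := sqrt_three_sq
  rw [b5, div_eq_iff (by simp)]
  ring_nf
  grind

lemma b6_endpoint : b6 t₀ = 1351 / 128 + 195 / 32 * Real.sqrt 3 := by
  have := sqrt_three_sq
  rw [b6, w_endpoint, div_eq_iff (by simp)]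
  ring_nf
  grind

lemma Z_endpoint (x : ℝ) :
    Z t₀ x = -1 + 18 * ((x + 1) * (2 + Real.sqrt 3) / 4 - 1) ^ 2
      - 48 * ((x + 1) * (2 + Real.sqrt 3) / 4 - 1) ^ 4
      + 32 * ((x + 1) * (2 + Real.sqrt 3) / 4 - 1) ^ 6 := by
  have := sqrt_three_sq
  rw [Z, b0_endpoint, b1_endpoint, b2_endpoint, b3_endpoint, b4_endpoint, b5_endpoint, b6_endpoint]
  ring_nf
  grind

theorem stmt16 : ∀ x : ℝ,
    Tendsto (fun t => Z t x)
      (nhdsWithin ((5 - 3 * Real.sqrt 3) / 2) (Set.Ioi ((5 - 3 * Real.sqrt 3) / 2)))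
      (nhds (-1 + 18 * ((x + 1) * (2 + Real.sqrt 3) / 4 - 1) ^ 2
        - 48 * ((x + 1) * (2 + Real.sqrt 3) / 4 - 1) ^ 4
        + 32 * ((x + 1) * (2 + Real.sqrt 3) / 4 - 1) ^ 6)) := by
  intro x
  rw [← Z_endpoint x]
  exact (continuousAt_Z x one_add_two_mul_endpoint_ne_zero one_sub_four_mul_endpoint_ne_zero).tendsto.mono_left
    nhdsWithin_le_nhds
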